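/- Let q be a prime power and let d ≥ 2 be an integer. Then for all a, b ∈ F_q, the number of x ∈ F_q with x^d = a·x + b is at most max(gcd(d, q−1), 1 + gcd(d−1, q−1), ⌊1/2 + √(q−1)⌋). In particular, if ⌊1/2 + √(q−1)⌋ ≤ max(gcd(d, q−1), 1 + gcd(d−1, q−1)), then the degree of x^d equals max(gcd(d, q−1), 1 + gcd(d−1, q−1)). -/

import Mathlib

/-!
If `a = 0` the solutions of `x ^ d = b` form (at most) a coset of the `d`-th roots of unity, of
which the cyclic group `Fˣ` has `gcd(d, q - 1)`. If `b = 0` the solutions are `0` and those of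
`x ^ (d - 1) = a`. If `a, b ≠ 0`, the solutions are nonzero and a pair `x ≠ y` of them is
determined by its ratio `x / y`: eliminating between the equations for `x = t y` and `y` gives `y`
as a rational function of `t`. Hence the `N (N - 1)` ordered pairs of distinct solutions inject
into `F \ {0, 1}`, so `N (N - 1) ≤ q - 2`, i.e. `N ≤ ⌊1/2 + √(q - 1)⌋`. The equations `x ^ d = 1`
and `x ^ d = x` attain the first two bounds.
-/

open Finset

section PowerEquations

variable {F : Type*} [Field F]

lemma card_pow_eq_one_eq_gcd [Fintype F] {n : ℕ} (hn : n ≠ 0) :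
    Nat.card {x : F // x ^ n = 1} = n.gcd (Fintype.card F - 1) := by
  have e : (powMonoidHom n : Fˣ →* Fˣ).ker ≃ {x : F // x ^ n = 1} :=
    { toFun u := ⟨(u : Fˣ), by simpa using congrArg Units.val (MonoidHom.mem_ker.1 u.2)⟩
      invFun x := ⟨Units.mk0 x (IsUnit.of_pow_eq_one x.2 hn).ne_zero,
        by simp [Units.ext_iff, x.2]⟩
      left_inv u := by ext; rfl
      right_inv x := rfl }
  rw [← Nat.card_congr e, IsCyclic.card_powMonoidHom_ker, Nat.card_units,
    Nat.card_eq_fintype_card, Nat.gcd_comm]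

lemma card_pow_eq_le_card_pow_eq_one [Finite F] {n : ℕ} (hn : n ≠ 0) (c : F) :
    Nat.card {x : F // x ^ n = c} ≤ Nat.card {x : F // x ^ n = 1} := by
  rcases eq_or_ne c 0 with rfl | hc
  · simp only [pow_eq_zero_iff hn, Nat.card_unique]
    exact Nat.card_pos_iff.2 ⟨⟨⟨1, one_pow n⟩⟩, inferInstance⟩
  rcases isEmpty_or_nonempty {x : F // x ^ n = c} with h | ⟨x₀, hx₀⟩
  · simp
  have hx₀' : x₀ ≠ 0 := by rintro rfl; exact hc (by simpa [hn] using hx₀.symm)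
  refine Nat.card_le_card_of_injective
    (fun x => ⟨x / x₀, by rw [div_pow, x.2, hx₀, div_self hc]⟩) fun x y hxy => ?_
  exact Subtype.ext ((div_left_inj' hx₀').1 (congrArg Subtype.val hxy))

lemma card_pow_eq_le_gcd [Fintype F] {n : ℕ} (hn : n ≠ 0) (c : F) :
    Nat.card {x : F // x ^ n = c} ≤ n.gcd (Fintype.card F - 1) :=
  card_pow_eq_one_eq_gcd (F := F) hn ▸ card_pow_eq_le_card_pow_eq_one hn c

lemma card_pow_succ_eq_mul_self [Finite F] {n : ℕ} (hn : n ≠ 0) {a : F} (ha : a ≠ 0) :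
    Nat.card {x : F // x ^ (n + 1) = a * x} = Nat.card {x : F // x ^ n = a} + 1 := by
  have hset : {x : F | x ^ (n + 1) = a * x} = insert 0 {x : F | x ^ n = a} := by
    ext x
    simp only [Set.mem_ofPred_eq, Set.mem_insert_iff]
    rw [pow_succ, mul_eq_mul_right_iff, or_comm]
  have h0 : (0 : F) ∉ {x : F | x ^ n = a} := by simpa [zero_pow hn] using ha.symm
  have := Set.ncard_insert_of_notMem h0
  rw [← hset] at this
  exact this

lemma ne_zero_of_pow_eq_mul_add {d : ℕ} {a b x : F} (hd : d ≠ 0) (hb : b ≠ 0)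
    (hx : x ^ d = a * x + b) : x ≠ 0 := by
  rintro rfl
  simp [zero_pow hd] at hx
  exact hb hx.symm

lemma eq_of_pow_eq_mul_add_of_ne {d : ℕ} {a b x y : F} (hd : d ≠ 0) (ha : a ≠ 0)
    (hb : b ≠ 0) (hx : x ^ d = a * x + b) (hy : y ^ d = a * y + b) (hxy : x ≠ y) :
    y = b * (1 - (x / y) ^ d) / (a * ((x / y) ^ d - x / y)) := by
  set t := x / y
  have hxt : x = t * y := (div_mul_cancel₀ x (ne_zero_of_pow_eq_mul_add hd hb hy)).symm
  have ht1 : t - 1 ≠ 0 := fun h => hxy (by rw [hxt, sub_eq_zero.1 h, one_mul])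
  have htx : t ^ d * y ^ d = a * (t * y) + b := by rw [← mul_pow, ← hxt, hx]
  have hb' : (t ^ d - t) * y ^ d = b * (1 - t) := by linear_combination htx - t * hy
  have ha' : (t ^ d - 1) * y ^ d = a * y * (t - 1) := by linear_combination htx - hy
  have hden : t ^ d - t ≠ 0 := by
    intro h
    rw [h, zero_mul, eq_comm, ← neg_sub, mul_neg, neg_eq_zero] at hb'
    exact mul_ne_zero hb ht1 hb'
  rw [eq_div_iff (mul_ne_zero ha hden)]
  refine mul_left_cancel₀ ht1 ?_
  linear_combination (t ^ d - 1) * hb' + (t - t ^ d) * ha'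

lemma card_pow_eq_mul_add_mul_pred_lt [Fintype F] {d : ℕ} {a b : F} (hd : d ≠ 0)
    (ha : a ≠ 0) (hb : b ≠ 0) :
    Nat.card {x : F // x ^ d = a * x + b} * (Nat.card {x : F // x ^ d = a * x + b} - 1) <
      Fintype.card F - 1 := by
  classical
  set S := univ.filter fun x : F => x ^ d = a * x + b
  have hS : Nat.card {x : F // x ^ d = a * x + b} = #S := by
    rw [Nat.card_eq_fintype_card, Fintype.card_subtype]
  have hmem {x y : F} (hp : (x, y) ∈ (S.offDiag : Set (F × F))) :
      x ^ d = a * x + b ∧ y ^ d = a * y + b ∧ x ≠ y := by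
    simpa [S] using hp
  have hmaps : Set.MapsTo (fun p : F × F => p.1 / p.2) S.offDiag ({0, 1}ᶜ : Finset F) := by
    rintro ⟨x, y⟩ hp
    obtain ⟨hx, hy, hxy⟩ := hmem hp
    have hy0 := ne_zero_of_pow_eq_mul_add hd hb hy
    simp [ne_zero_of_pow_eq_mul_add hd hb hx, hy0, div_eq_one_iff_eq hy0, hxy]
  have hinj : Set.InjOn (fun p : F × F => p.1 / p.2) S.offDiag := by
    rintro ⟨x, y⟩ hp ⟨x', y'⟩ hp' (h : x / y = x' / y')
    obtain ⟨hx, hy, hxy⟩ := hmem hp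
    obtain ⟨hx', hy', hxy'⟩ := hmem hp'
    obtain rfl : y = y' := by
      rw [eq_of_pow_eq_mul_add_of_ne hd ha hb hx hy hxy,
        eq_of_pow_eq_mul_add_of_ne hd ha hb hx' hy' hxy', h]
    rw [(div_left_inj' (ne_zero_of_pow_eq_mul_add hd hb hy)).1 h]
  have hcard := card_le_card_of_injOn _ hmaps hinj
  have hq : 2 ≤ Fintype.card F := Fintype.one_lt_card
  rw [offDiag_card, card_compl, card_pair zero_ne_one] at hcard
  rw [hS, Nat.mul_sub_one]
  omega

end PowerEquations

lemma le_floor_half_add_sqrt_of_mul_pred_lt {N m : ℕ} (h : N * (N - 1) < m) :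
    N ≤ ⌊1 / 2 + √(m : ℝ)⌋₊ := by
  apply Nat.le_floor
  rcases N.eq_zero_or_pos with rfl | hN
  · rw [Nat.cast_zero]; positivity
  have hsq : ((N : ℝ) - 1 / 2) ^ 2 ≤ m := by
    have : ((N * (N - 1) + 1 : ℕ) : ℝ) ≤ m := by exact_mod_cast h
    push_cast [Nat.cast_sub hN] at this
    nlinarith
  linarith [le_abs_self ((N : ℝ) - 1 / 2), Real.abs_le_sqrt hsq]

theorem stmt15 {F : Type*} [Field F] [Fintype F] (d : ℕ) (hd : 2 ≤ d) :
    (∀ a b : F, Nat.card {x : F // x ^ d = a * x + b} ≤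
      max (max (Nat.gcd d (Fintype.card F - 1)) (1 + Nat.gcd (d - 1) (Fintype.card F - 1)))
        ⌊(1 / 2 : ℝ) + Real.sqrt ((Fintype.card F : ℝ) - 1)⌋₊) ∧
    (⌊(1 / 2 : ℝ) + Real.sqrt ((Fintype.card F : ℝ) - 1)⌋₊ ≤
        max (Nat.gcd d (Fintype.card F - 1)) (1 + Nat.gcd (d - 1) (Fintype.card F - 1)) →
      (∀ a b : F, Nat.card {x : F // x ^ d = a * x + b} ≤
        max (Nat.gcd d (Fintype.card F - 1)) (1 + Nat.gcd (d - 1) (Fintype.card F - 1))) ∧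
      (∃ a b : F, Nat.card {x : F // x ^ d = a * x + b} =
        max (Nat.gcd d (Fintype.card F - 1)) (1 + Nat.gcd (d - 1) (Fintype.card F - 1)))) := by
  obtain ⟨n, rfl⟩ : ∃ n, d = n + 1 := ⟨d - 1, by omega⟩
  have hn : n ≠ 0 := by omega
  rw [Nat.add_sub_cancel, ← Nat.cast_pred Fintype.card_pos]
  have bound (a b : F) : Nat.card {x : F // x ^ (n + 1) = a * x + b} ≤
      max (max ((n + 1).gcd (Fintype.card F - 1)) (1 + n.gcd (Fintype.card F - 1)))
        ⌊1 / 2 + √((Fintype.card F - 1 : ℕ) : ℝ)⌋₊ := by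
    rcases eq_or_ne a 0 with rfl | ha
    · simp only [zero_mul, zero_add]
      exact le_max_of_le_left (le_max_of_le_left (card_pow_eq_le_gcd n.succ_ne_zero b))
    rcases eq_or_ne b 0 with rfl | hb
    · simp only [add_zero]
      rw [card_pow_succ_eq_mul_self hn ha, add_comm 1]
      exact le_max_of_le_left (le_max_of_le_right (Nat.add_le_add_right
        (card_pow_eq_le_gcd hn a) 1))
    · exact le_max_of_le_right (le_floor_half_add_sqrt_of_mul_pred_lt
        (card_pow_eq_mul_add_mul_pred_lt n.succ_ne_zero ha hb))
  refine ⟨bound, fun h => ⟨fun a b => max_eq_left h ▸ bound a b, ?_⟩⟩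
  rcases le_total (1 + n.gcd (Fintype.card F - 1)) ((n + 1).gcd (Fintype.card F - 1)) with h | h
  · refine ⟨0, 1, ?_⟩
    rw [max_eq_left h, ← card_pow_eq_one_eq_gcd n.succ_ne_zero]
    simp only [zero_mul, zero_add]
  · refine ⟨1, 0, ?_⟩
    simp only [add_zero]
    rw [max_eq_right h, add_comm 1, ← card_pow_eq_one_eq_gcd hn,
      ← card_pow_succ_eq_mul_self hn one_ne_zero]
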